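/- For every integer n ≥ 1, M_{4n} = 2n + M_{n+1}, where m_k (resp. M_k) is the minimum (resp. maximum) number of alternations among length-k factors of the Thue–Morse sequence. -/

import Mathlib

/-- The reduction of a word: replace each maximal run of identical characters
by a single character. -/
def red {α : Type*} [DecidableEq α] (w : List α) : List α :=
  w.destutter (· ≠ ·)

/-- The length-`k` factor of the infinite sequence `x` (1-indexed) starting at
position `i`. -/
def factorAt {α : Type*} (x : ℕ → α) (i k : ℕ) : List α :=
  (List.range k).map (fun j => x (i + j))

/-- The reduced factor complexity: the number of length-`n` factors of `x`,
counted up to reduced-equivalence (`red v = red w`). -/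
noncomputable def redFactorComplexity {α : Type*} [DecidableEq α]
    (x : ℕ → α) (n : ℕ) : ℕ :=
  Set.ncard { u : List α | ∃ i ≥ 1, u = red (factorAt x i n) }

/-- The Thue–Morse sequence (1-indexed): `t n` is the parity of the number of
1's in the binary expansion of `n - 1`. -/
def thueMorse (n : ℕ) : Bool :=
  decide ((Nat.digits 2 (n - 1)).sum % 2 = 1)

/-- The number of alternations (occurrences of 01 or 10) in a binary word. -/
def alt (w : List Bool) : ℕ :=
  (List.zipWith (fun a b => a != b) w w.tail).count true

/-- The minimum number of alternations among length-`k` factors of Thue–Morse. -/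
noncomputable def tmAltMin (k : ℕ) : ℕ :=
  sInf { a : ℕ | ∃ i ≥ 1, a = alt (factorAt thueMorse i k) }

/-- The maximum number of alternations among length-`k` factors of Thue–Morse. -/
noncomputable def tmAltMax (k : ℕ) : ℕ :=
  sSup { a : ℕ | ∃ i ≥ 1, a = alt (factorAt thueMorse i k) }

/-- The Thue–Morse morphism `0 → 01`, `1 → 10`. -/
def mu (w : List Bool) : List Bool :=
  w.flatMap (fun b => if b then [true, false] else [false, true])

/-- The regular paperfolding sequence (1-indexed): writing `n = n' * 2^k` with
`n'` odd, `f n = 1` iff `n' ≡ 3 (mod 4)`. -/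
def paperfold (n : ℕ) : Bool :=
  decide ((n / 2 ^ (n.factorization 2)) % 4 = 3)

/-- The reduced abelian complexity: the number of length-`n` factors of `x`,
counted up to the equivalence identifying `v` and `w` whenever `red v` is a
rearrangement of the characters of `red w`. -/
noncomputable def redAbelianComplexity {α : Type*} [DecidableEq α]
    (x : ℕ → α) (n : ℕ) : ℕ :=
  Set.ncard { m : Multiset α | ∃ i ≥ 1, m = ↑(red (factorAt x i n)) }

/-! The square `μ²` of the Thue–Morse morphism sends a letter `a` to `a ā ā a` (`ā` the
complement of `a`), and `alt (μ² w) = 2 |w| + alt w`. Hence the factor of length `4(n+1)` at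
a position `4p` has `2(n+1) + alt v` alternations, where `v` is the factor of length `n+1`
at `p`. Every factor of length `4n` lies inside such a factor at an offset `r < 4`, and cutting
off the two ends loses at least two alternations, exactly two when `r = 2`. -/

lemma alt_cons_cons (a b : Bool) (l : List Bool) :
    alt (a :: b :: l) = (if a = b then 0 else 1) + alt (b :: l) := by
  cases a <;> cases b <;> simp [alt] <;> omega

lemma alt_append_cons (xs : List Bool) (y : Bool) (ys : List Bool) :
    alt (xs ++ y :: ys) = alt (xs ++ [y]) + alt (y :: ys) := by
  induction xs with
  | nil => simp [alt]
  | cons a xs ih =>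
    cases xs with
    | nil => rw [List.singleton_append, List.singleton_append, alt_cons_cons, alt_cons_cons]; rfl
    | cons b xs =>
      simp only [List.cons_append] at ih ⊢
      rw [alt_cons_cons, alt_cons_cons a b, ih]
      omega

lemma alt_le_alt_append (xs ys : List Bool) : alt xs ≤ alt (xs ++ ys) := by
  induction xs with
  | nil => exact Nat.zero_le _
  | cons a xs ih =>
    cases xs with
    | nil => exact Nat.zero_le _
    | cons b xs =>
      simp only [List.cons_append] at ih ⊢
      rw [alt_cons_cons, alt_cons_cons a b]
      omega

lemma alt_map_not (w : List Bool) : alt (w.map (!·)) = alt w := by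
  simp only [alt, ← List.map_tail, List.zipWith_map_left, List.zipWith_map_right,
    Bool.not_bne_not]

lemma alt_le_length (w : List Bool) : alt w ≤ w.length :=
  (List.count_le_length ..).trans (by simp [List.length_zipWith])

section factorAt

variable {α : Type*} (x : ℕ → α)

@[simp]
lemma length_factorAt (i k : ℕ) : (factorAt x i k).length = k := by
  simp [factorAt]

@[simp]
lemma factorAt_zero (i : ℕ) : factorAt x i 0 = [] := rfl

lemma factorAt_succ (i k : ℕ) : factorAt x i (k + 1) = x i :: factorAt x (i + 1) k := by
  simp [factorAt, List.range_succ_eq_map, Nat.add_assoc, Nat.add_comm 1]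

lemma factorAt_succ_eq_append (i k : ℕ) :
    factorAt x i (k + 1) = factorAt x i k ++ [x (i + k)] := by
  simp [factorAt, List.range_succ]

lemma factorAt_add (i k l : ℕ) :
    factorAt x i (k + l) = factorAt x i k ++ factorAt x (i + k) l := by
  simp [factorAt, List.range_add, Nat.add_assoc]

end factorAt

lemma alt_factorAt_add (x : ℕ → Bool) (i k l : ℕ) :
    alt (factorAt x i (k + l + 1)) =
      alt (factorAt x i (k + 1)) + alt (factorAt x (i + k) (l + 1)) := by
  rw [Nat.add_assoc, factorAt_add, factorAt_add x i k 1, factorAt_succ, factorAt_succ x (i + k) 0,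
    alt_append_cons]
  rfl

lemma mu_cons (a : Bool) (w : List Bool) : mu (a :: w) = a :: (!a) :: mu w := by
  cases a <;> rfl

lemma length_mu (w : List Bool) : (mu w).length = 2 * w.length := by
  induction w with
  | nil => rfl
  | cons a w ih => rw [mu_cons]; simp [ih]; omega

-- Each letter alternates inside its image, and the images of adjacent letters `a b` meet in an
-- alternation exactly when `a = b`.
lemma alt_mu_add_alt (w : List Bool) (hw : w ≠ []) :
    alt (mu w) + alt w + 1 = 2 * w.length := by
  induction w with
  | nil => exact absurd rfl hw
  | cons a w ih =>
    cases w with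
    | nil => cases a <;> rfl
    | cons b w =>
      have ih := ih (List.cons_ne_nil b w)
      simp only [mu_cons, alt_cons_cons, List.length_cons] at ih ⊢
      cases a <;> cases b <;> simp at ih ⊢ <;> omega

lemma alt_mu_mu (w : List Bool) : alt (mu (mu w)) = 2 * w.length + alt w := by
  by_cases hw : w = []
  · subst hw; rfl
  have h1 := alt_mu_add_alt w hw
  have h2 := alt_mu_add_alt (mu w) (by simpa [← List.length_pos_iff, length_mu] using hw)
  rw [length_mu] at h2
  omega

/-- `thueMorse` indexed from `0`, so that `tm (2 * j) = tm j` and `tm (2 * j + 1) = !tm j`. -/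
def tm (n : ℕ) : Bool := thueMorse (n + 1)

lemma tm_two_mul (j : ℕ) : tm (2 * j) = tm j := by
  rcases j.eq_zero_or_pos with rfl | hj
  · rfl
  simp [tm, thueMorse, Nat.digits_def' one_lt_two (by omega : 0 < 2 * j)]

lemma tm_two_mul_add_one (j : ℕ) : tm (2 * j + 1) = !tm j := by
  have hdiv : (2 * j + 1) / 2 = j := by omega
  simp only [tm, thueMorse, Nat.add_sub_cancel, Nat.digits_def' one_lt_two (Nat.succ_pos _),
    hdiv, List.sum_cons]
  rcases Nat.mod_two_eq_zero_or_one (Nat.digits 2 j).sum with h | h <;> simp [Nat.add_mod, h]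

lemma factorAt_tm_two_mul (p k : ℕ) : factorAt tm (2 * p) (2 * k) = mu (factorAt tm p k) := by
  induction k generalizing p with
  | zero => rfl
  | succ k ih =>
    rw [Nat.mul_succ, factorAt_succ, factorAt_succ, factorAt_succ, mu_cons, tm_two_mul,
      tm_two_mul_add_one, ← ih]
    congr 3

lemma factorAt_tm_four_mul (p k : ℕ) :
    factorAt tm (4 * p) (4 * k) = mu (mu (factorAt tm p k)) := by
  rw [← factorAt_tm_two_mul, ← factorAt_tm_two_mul, ← Nat.mul_assoc, ← Nat.mul_assoc]

lemma alt_factorAt_tm_four_mul (p k : ℕ) :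
    alt (factorAt tm (4 * p) (4 * k)) = 2 * k + alt (factorAt tm p k) := by
  rw [factorAt_tm_four_mul, alt_mu_mu, length_factorAt]

lemma factorAt_tm_four_mul_four (p : ℕ) :
    factorAt tm (4 * p) 4 = [tm p, !tm p, !tm p, tm p] := by
  rw [← Nat.mul_one 4, factorAt_tm_four_mul, factorAt_succ, factorAt_zero]
  cases tm p <;> rfl

lemma alt_factorAt_add_add (x : ℕ → Bool) (i a b c : ℕ) :
    alt (factorAt x i (a + b + c + 1)) = alt (factorAt x i (a + 1)) +
      alt (factorAt x (i + a) (b + 1)) + alt (factorAt x (i + a + b) (c + 1)) := by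
  rw [Nat.add_assoc a, alt_factorAt_add, alt_factorAt_add]
  omega

lemma factorAt_tm_four_mul_add (q s k : ℕ) (h : s + k ≤ 4) :
    factorAt tm (4 * q + s) k = ([tm q, !tm q, !tm q, tm q].drop s).take k := by
  rw [← factorAt_tm_four_mul_four,
    show factorAt tm (4 * q) 4 = factorAt tm (4 * q) (s + k + (4 - (s + k))) by
      rw [Nat.add_sub_cancel' h],
    factorAt_add, factorAt_add, List.append_assoc,
    List.drop_left' (length_factorAt ..), List.take_left' (length_factorAt ..)]

lemma alt_factorAt_tm_split (p n s : ℕ) (hn : 1 ≤ n) (hs : s ≤ 3) :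
    alt (factorAt tm (4 * p) (4 * (n + 1))) = alt (factorAt tm (4 * p) (s + 2)) +
      alt (factorAt tm (4 * p + (s + 1)) (4 * n)) +
      alt (factorAt tm (4 * (p + n) + s) (4 - s)) := by
  have h := alt_factorAt_add_add tm (4 * p) (s + 1) (4 * n - 1) (3 - s)
  rwa [show s + 1 + (4 * n - 1) + (3 - s) + 1 = 4 * (n + 1) by omega,
    show 4 * p + (s + 1) + (4 * n - 1) = 4 * (p + n) + s by omega,
    show 4 * n - 1 + 1 = 4 * n by omega, show 3 - s + 1 = 4 - s by omega] at h

lemma alt_factorAt_tm_four_mul_add (q s k : ℕ) (h : s + k ≤ 4) :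
    alt (factorAt tm (4 * q + s) k) = alt (([false, true, true, false].drop s).take k) := by
  rw [factorAt_tm_four_mul_add q s k h]
  cases tm q
  · rfl
  · rw [← alt_map_not, List.map_take, List.map_drop]
    rfl

lemma alt_factorAt_tm_four_mul_add_two (p n : ℕ) (hn : 1 ≤ n) :
    alt (factorAt tm (4 * p + 2) (4 * n)) = 2 * n + alt (factorAt tm p (n + 1)) := by
  have hsplit := alt_factorAt_tm_split p n 1 hn (by norm_num)
  simp only [Nat.reduceAdd] at hsplit
  have hprefix : alt (factorAt tm (4 * p) 3) = 1 :=
    alt_factorAt_tm_four_mul_add p 0 3 (by norm_num)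
  have hsuffix : alt (factorAt tm (4 * (p + n) + 1) 3) = 1 :=
    alt_factorAt_tm_four_mul_add (p + n) 1 3 (by norm_num)
  rw [alt_factorAt_tm_four_mul] at hsplit
  simp only [hprefix, hsuffix] at hsplit
  omega

lemma alt_factorAt_tm_four_mul_add_le (p n r : ℕ) (hn : 1 ≤ n) (hr : r < 4) :
    alt (factorAt tm (4 * p + r) (4 * n)) ≤ 2 * n + alt (factorAt tm p (n + 1)) := by
  have hwhole := alt_factorAt_tm_four_mul p (n + 1)
  interval_cases r
  · rw [Nat.add_zero, alt_factorAt_tm_four_mul, factorAt_succ_eq_append]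
    exact Nat.add_le_add_left (alt_le_alt_append _ _) _
  · have hsplit := alt_factorAt_tm_split p n 0 hn (by norm_num)
    simp only [Nat.reduceAdd, Nat.reduceSub, Nat.add_zero] at hsplit
    have hsuffix : alt (factorAt tm (4 * (p + n)) 4) = 2 :=
      alt_factorAt_tm_four_mul_add (p + n) 0 4 (by norm_num)
    omega
  · exact (alt_factorAt_tm_four_mul_add_two p n hn).le
  · have hsplit := alt_factorAt_tm_split p n 2 hn (by norm_num)
    simp only [Nat.reduceAdd, Nat.reduceSub] at hsplit
    have hprefix : alt (factorAt tm (4 * p) 4) = 2 :=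
      alt_factorAt_tm_four_mul_add p 0 4 (by norm_num)
    omega

lemma bddAbove_range_alt_factorAt (x : ℕ → Bool) (k : ℕ) :
    BddAbove (Set.range fun i => alt (factorAt x i k)) :=
  ⟨k, by rintro _ ⟨i, rfl⟩; simpa using alt_le_length (factorAt x i k)⟩

lemma factorAt_tm (p k : ℕ) : factorAt tm p k = factorAt thueMorse (p + 1) k := by
  simp only [factorAt, tm, Nat.add_right_comm]

lemma tmAltMax_eq_sSup (k : ℕ) :
    tmAltMax k = sSup (Set.range fun p => alt (factorAt tm p k)) := by
  unfold tmAltMax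
  congr 1
  ext a
  constructor
  · rintro ⟨i, hi, rfl⟩
    obtain ⟨p, rfl⟩ := Nat.exists_eq_add_of_le' hi
    exact ⟨p, congrArg alt (factorAt_tm p k)⟩
  · rintro ⟨p, rfl⟩
    exact ⟨p + 1, Nat.succ_pos p, congrArg alt (factorAt_tm p k)⟩

theorem stmt7 (n : ℕ) (hn : 1 ≤ n) :
    tmAltMax (4 * n) = 2 * n + tmAltMax (n + 1) := by
  rw [tmAltMax_eq_sSup, tmAltMax_eq_sSup]
  obtain ⟨p, hp⟩ := Nat.sSup_mem (Set.range_nonempty fun p => alt (factorAt tm p (n + 1)))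
    (bddAbove_range_alt_factorAt tm (n + 1))
  refine IsGreatest.csSup_eq ⟨⟨4 * p + 2, ?_⟩, ?_⟩
  · exact (alt_factorAt_tm_four_mul_add_two p n hn).trans (congrArg _ hp)
  · rintro _ ⟨q, rfl⟩
    obtain ⟨p, r, hr, rfl⟩ : ∃ p r, r < 4 ∧ q = 4 * p + r :=
      ⟨q / 4, q % 4, q.mod_lt four_pos, (q.div_add_mod 4).symm⟩
    exact (alt_factorAt_tm_four_mul_add_le p n r hn hr).trans
      (Nat.add_le_add_left (le_csSup (bddAbove_range_alt_factorAt tm (n + 1)) ⟨p, rfl⟩) _)
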